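/- arXiv:2004.13258 — 3 statements merged into one kernel-verified Lean document; each statement's English description precedes it below -/
import Mathlib

section
/- Let x_1,…,x_m; y_1,…,y_m be a partial Galois coordinate system of S over R and f a partial 1-cocycle. Then ∑_{i=1}^m f̂(x_i) · f⁻¹-tilde(y_i) = 1, where f⁻¹-tilde(y) = ∑_{g∈G} f(g) α_g(y 1_{g⁻¹}). Consequently Q_f S = S and Q_f is a faithful R-module. -/
/-! Transporting the coordinate identity `∑ᵢ xᵢ α_k(yᵢ 1_{k⁻¹}) = δ_{1,k}` at `k = g⁻¹h` along `α_g`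
gives the orthogonality `∑ᵢ α_g(a xᵢ 1_{g⁻¹}) α_h(yᵢ 1_{h⁻¹}) = δ_{g,h} α_g(a 1_{g⁻¹})`. It collapses
the double sum `∑ᵢ f̂(xᵢ) (f⁻¹)~(yᵢ)` to `∑_g f(g)⁻¹ f(g) α_g(w 1_{g⁻¹}) = ∑_g α_g(w 1_{g⁻¹}) = 1`.
The cocycle identity puts every `f̂(x)` in `Q_f`, so `1 ∈ Q_f S`, and an `r` with `r Q_f = 0`
satisfies `r = r · 1 = 0`. -/

/-- A unital partial action of a group `G` on a commutative ring `S`.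
The unital ideal `S_g` is `S * e g` where `e g` is a central idempotent,
and `act g` is the partial isomorphism `α_g` (extended to all of `S` by
first multiplying by the identity `e g⁻¹` of its domain ideal). -/
structure PartialAction (G : Type*) [Group G] (S : Type*) [CommRing S] where
  e : G → S
  act : G → S → S
  e_idem : ∀ g, e g * e g = e g
  e_one : e 1 = 1
  act_one : ∀ x, act 1 x = x
  act_add : ∀ g x y, act g (x + y) = act g x + act g y
  act_mul : ∀ g x y, act g (x * y) = act g x * act g y
  act_restrict : ∀ g x, act g (x * e g⁻¹) = act g x
  act_mem : ∀ g x, act g x * e g = act g x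
  act_e : ∀ g, act g (e g⁻¹) = e g
  act_inter : ∀ g h, act g (e g⁻¹ * e h) = e g * e (g * h)
  act_comp : ∀ g h x, act g (act h x * e g⁻¹) = act (g * h) (x * e h⁻¹) * e g
  act_inv : ∀ g x, act g⁻¹ (act g (x * e g⁻¹)) = x * e g⁻¹

namespace PartialAction

variable {G : Type*} [Group G] {S : Type*} [CommRing S] (P : PartialAction G S)

/-- The subring of subinvariants `S^α`. -/
def invariants : Set S := {a | ∀ g : G, P.act g (a * P.e g⁻¹) = a * P.e g}

/-- `S ⊇ R` is a partial Galois extension: `R = S^α` and there is a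
partial Galois coordinate system. -/
def IsPartialGalois [Fintype G] [DecidableEq G] (R : Subring S) : Prop :=
  ((R : Set S) = P.invariants) ∧
    ∃ m : ℕ, ∃ x y : Fin m → S, ∀ g : G,
      (∑ i : Fin m, x i * P.act g (y i * P.e g⁻¹)) = if g = 1 then 1 else 0

/-- A partial 1-cocycle with values in `S`: `f g` is invertible in the
unital ideal `S e g` with inverse `finv g`, and the cocycle identity holds. -/
structure Cocycle where
  f : G → S
  finv : G → S
  f_mem : ∀ g, f g * P.e g = f g
  finv_mem : ∀ g, finv g * P.e g = finv g
  f_mul_finv : ∀ g, f g * finv g = P.e g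
  cocycle : ∀ g h, f (g * h) * P.e g = f g * P.act g (f h * P.e g⁻¹)

variable {P}

theorem act_zero (g : G) : P.act g 0 = 0 := by
  have := P.act_add g 0 0
  simpa using this.symm

/-- The set `Q_f = {a ∈ S : α_g(a 1_{g⁻¹}) = f(g) a for all g}` attached to a map `f : G → S`. -/
def Qset (P : PartialAction G S) (f : G → S) : Set S :=
  {a | ∀ g : G, P.act g (a * P.e g⁻¹) = f g * a}

/-- `Q_f` as an `R`-submodule of `S`, where `R` is a subring of invariants. -/
def Qmod (P : PartialAction G S) (R : Subring S)
    (hR : ∀ r ∈ R, ∀ g : G, P.act g (r * P.e g⁻¹) = r * P.e g)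
    (f : G → S) : Submodule R S where
  carrier := Qset P f
  zero_mem' := by
    intro g
    simp [Qset, act_zero]
  add_mem' := by
    intro a b ha hb g
    have := P.act_add g (a * P.e g⁻¹) (b * P.e g⁻¹)
    rw [Qset] at *
    rw [add_mul, this, ha g, hb g, mul_add]
  smul_mem' := by
    intro c x hx g
    have hc : (c : S) ∈ (R : Set S) := c.2
    have hcx : c • x = (c : S) * x := Subring.smul_def c x
    have hx' : ∀ g : G, P.act g (x * P.e g⁻¹) = f g * x := hx
    rw [hcx]
    have h1 : P.act g ((c : S) * x * P.e g⁻¹) = P.act g ((c : S)) * P.act g x := by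
      rw [P.act_restrict, P.act_mul]
    have h2 : P.act g ((c : S)) = (c : S) * P.e g := by
      rw [← P.act_restrict g (c : S), hR c c.2 g]
    have h3 : P.act g x = f g * x := by
      rw [← P.act_restrict g x]; exact hx' g
    have h4 : (f g * x) * P.e g = f g * x := by
      have := P.act_mem g (x * P.e g⁻¹)
      rw [P.act_restrict, h3] at this
      exact this
    rw [h1, h2, h3]
    have h5 : (c : S) * P.e g * (f g * x) = (c : S) * (f g * x * P.e g) := by ring
    rw [h5, h4]
    ring

end PartialAction

theorem Ideal.eq_zero_of_mul_eq_zero_of_span_eq_top {R : Type*} [CommRing R] {Q : Set R}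
    (hQ : Ideal.span Q = ⊤) {r : R} (hr : ∀ q ∈ Q, r * q = 0) : r = 0 := by
  have h1 : (1 : R) ∈ LinearMap.ker (LinearMap.mulLeft R r) :=
    Ideal.span_le.mpr (fun q hq => hr q hq) (hQ ▸ Submodule.mem_top)
  simpa using h1

namespace PartialAction

variable {G : Type*} [Group G] {S : Type*} [CommRing S] {P : PartialAction G S}

theorem act_sum {ι : Type*} (s : Finset ι) (g : G) (v : ι → S) :
    P.act g (∑ i ∈ s, v i) = ∑ i ∈ s, P.act g (v i) :=
  map_sum (AddMonoidHom.mk' (P.act g) (P.act_add g)) v s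

theorem act_mul_act (g : G) (a b : S) :
    P.act g (a * P.e g⁻¹) * P.act g (b * P.e g⁻¹) = P.act g (a * b * P.e g⁻¹) := by
  rw [P.act_restrict, P.act_restrict, P.act_restrict, P.act_mul]

theorem act_mul_e_inv_mul (h g : G) (v : S) :
    P.act h (v * P.e (h⁻¹ * g)) = P.act h v * P.e g := by
  rw [P.act_mul, ← P.act_restrict h (P.e _), mul_comm (P.e _) (P.e h⁻¹), P.act_inter,
    mul_inv_cancel_left, ← mul_assoc, P.act_mem]

theorem act_mul_e (g h : G) (v : S) :
    P.act h v * P.e g = P.act g (P.act (g⁻¹ * h) v * P.e g⁻¹) := by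
  have hcomp := P.act_comp g (g⁻¹ * h) v
  rwa [mul_inv_cancel_left, mul_inv_rev, inv_inv, act_mul_e_inv_mul, mul_assoc, P.e_idem,
    eq_comm] at hcomp

theorem Cocycle.act_finv_mul_e_mul_e (c : P.Cocycle) (k h : G) :
    P.act k (c.finv (k⁻¹ * h)) * P.e h * P.e k = c.f k * c.finv h := by
  -- multiply the cocycle identity at `(k, k⁻¹ h)` by `f(h)⁻¹ α_k(f(k⁻¹ h)⁻¹)`
  have hcoc := congrArg (· * (c.finv h * P.act k (c.finv (k⁻¹ * h)))) (c.cocycle k (k⁻¹ * h))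
  have hinner : P.act k (c.f (k⁻¹ * h) * P.e k⁻¹) * P.act k (c.finv (k⁻¹ * h)) = P.e k * P.e h := by
    rw [← P.act_mul, mul_right_comm, c.f_mul_finv, mul_comm, P.act_inter, mul_inv_cancel_left]
  calc P.act k (c.finv (k⁻¹ * h)) * P.e h * P.e k
      = c.f h * c.finv h * P.e k * P.act k (c.finv (k⁻¹ * h)) := by
        rw [c.f_mul_finv]; ring
    _ = c.f k * (P.act k (c.f (k⁻¹ * h) * P.e k⁻¹) * P.act k (c.finv (k⁻¹ * h))) * c.finv h := by
        simp only [mul_inv_cancel_left] at hcoc; linear_combination hcoc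
    _ = (c.f k * P.e k) * (c.finv h * P.e h) := by rw [hinner]; ring
    _ = c.f k * c.finv h := by rw [c.f_mem, c.finv_mem]

section Trace

variable [Fintype G]

/-- With `u = f⁻¹` and `z = w x` this is `f̂(x)`; with `u = f` it is `(f⁻¹)~(z)`. -/
def twistedTrace (P : PartialAction G S) (u : G → S) (z : S) : S :=
  ∑ g, u g * P.act g (z * P.e g⁻¹)

theorem Cocycle.twistedTrace_finv_mem_Qset (c : P.Cocycle) (z : S) :
    P.twistedTrace c.finv z ∈ P.Qset c.f := by
  intro k
  have hterm : ∀ h, P.act k (c.finv (k⁻¹ * h) * P.act (k⁻¹ * h) (z * P.e (k⁻¹ * h)⁻¹))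
      = c.f k * (c.finv h * P.act h (z * P.e h⁻¹)) := by
    intro h
    rw [P.act_mul, ← P.act_restrict k (P.act _ _), P.act_comp, mul_inv_cancel_left, mul_inv_rev,
      inv_inv, mul_assoc z, P.e_idem, act_mul_e_inv_mul, ← P.act_restrict h z, ← mul_assoc (c.f k),
      ← c.act_finv_mul_e_mul_e k h]
    linear_combination (P.act k (c.finv (k⁻¹ * h)) * P.act h (z * P.e h⁻¹)) * P.e_idem k
      - (P.act k (c.finv (k⁻¹ * h)) * P.e k) * P.act_mem h (z * P.e h⁻¹)
  rw [twistedTrace, P.act_restrict, act_sum, Finset.mul_sum, ← Equiv.sum_comp (Equiv.mulLeft k⁻¹)]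
  exact Finset.sum_congr rfl fun h _ => hterm h

end Trace

section Coordinates

variable [DecidableEq G]

def IsGaloisCoordinates {m : ℕ} (P : PartialAction G S) (x y : Fin m → S) : Prop :=
  ∀ g : G, (∑ i : Fin m, x i * P.act g (y i * P.e g⁻¹)) = if g = 1 then 1 else 0

variable {m : ℕ} {x y : Fin m → S}

theorem IsGaloisCoordinates.sum_act_mul_act (hxy : IsGaloisCoordinates P x y) (a : S) (g h : G) :
    (∑ i, P.act g (a * x i * P.e g⁻¹) * P.act h (y i * P.e h⁻¹))
      = if h = g then P.act g (a * P.e g⁻¹) else 0 := by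
  have hterm : ∀ i, P.act g (a * x i * P.e g⁻¹) * P.act h (y i * P.e h⁻¹)
      = P.act g (a * (x i * P.act (g⁻¹ * h) (y i * P.e (g⁻¹ * h)⁻¹)) * P.e g⁻¹) := by
    intro i
    rw [← P.act_mem g, mul_assoc, mul_comm (P.e g), P.act_restrict h, act_mul_e,
      P.act_restrict (g⁻¹ * h), act_mul_act, mul_assoc a (x i)]
  simp only [hterm, ← Finset.mul_sum, ← Finset.sum_mul, ← act_sum, hxy (g⁻¹ * h),
    inv_mul_eq_one, eq_comm (a := g)]
  split_ifs
  · rw [mul_one]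
  · rw [mul_zero, zero_mul, act_zero]

theorem IsGaloisCoordinates.sum_twistedTrace_mul_twistedTrace [Fintype G]
    (hxy : IsGaloisCoordinates P x y) (u v : G → S) (a : S) :
    ∑ i, P.twistedTrace u (a * x i) * P.twistedTrace v (y i)
      = ∑ g, u g * v g * P.act g (a * P.e g⁻¹) := by
  calc ∑ i, P.twistedTrace u (a * x i) * P.twistedTrace v (y i)
      = ∑ g, ∑ h, u g * v h *
          ∑ i, P.act g (a * x i * P.e g⁻¹) * P.act h (y i * P.e h⁻¹) := by
        simp only [twistedTrace, Finset.sum_mul_sum]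
        simp only [Finset.mul_sum]
        rw [Finset.sum_comm]
        refine Finset.sum_congr rfl fun g _ => ?_
        rw [Finset.sum_comm]
        exact Finset.sum_congr rfl fun h _ => Finset.sum_congr rfl fun i _ => by ring
    _ = ∑ g, u g * v g * P.act g (a * P.e g⁻¹) := by
        simp only [hxy.sum_act_mul_act, mul_ite, mul_zero, Finset.sum_ite_eq', Finset.mem_univ,
          if_true]

end Coordinates

end PartialAction

theorem hat_coordinates_sum_one_general {G : Type*} [CommGroup G] [Fintype G] [DecidableEq G]
    {S : Type*} [CommRing S] (P : PartialAction G S) (R : Subring S)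
    (m : ℕ) (x y : Fin m → S)
    (hcoord : ∀ g : G, (∑ i : Fin m, x i * P.act g (y i * P.e g⁻¹)) =
      if g = 1 then 1 else 0)
    (w : S) (hw : (∑ g : G, P.act g (w * P.e g⁻¹)) = 1)
    (c : P.Cocycle) (Fhat Gtilde : S → S)
    (hFhat : ∀ z, Fhat z = ∑ g : G, c.finv g * P.act g (w * z * P.e g⁻¹))
    (hGtilde : ∀ z, Gtilde z = ∑ g : G, c.f g * P.act g (z * P.e g⁻¹)) :
    (∑ i : Fin m, Fhat (x i) * Gtilde (y i)) = 1 ∧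
      Ideal.span (PartialAction.Qset P c.f) = ⊤ ∧
      (∀ r : S, r ∈ R → (∀ q ∈ PartialAction.Qset P c.f, r * q = 0) → r = 0) := by
  have hQ : ∀ z, Fhat z ∈ P.Qset c.f := fun z => hFhat z ▸ c.twistedTrace_finv_mem_Qset (w * z)
  have hsum : ∑ i, Fhat (x i) * Gtilde (y i) = 1 := calc
    ∑ i, Fhat (x i) * Gtilde (y i) = ∑ g, c.finv g * c.f g * P.act g (w * P.e g⁻¹) := by
      simp only [hFhat, hGtilde]
      exact PartialAction.IsGaloisCoordinates.sum_twistedTrace_mul_twistedTrace hcoord _ _ _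
    _ = ∑ g, P.act g (w * P.e g⁻¹) := Finset.sum_congr rfl fun g _ => by
      rw [mul_comm (c.finv g), c.f_mul_finv, mul_comm, P.act_mem]
    _ = 1 := hw
  have hspan : Ideal.span (P.Qset c.f) = ⊤ := by
    rw [Ideal.eq_top_iff_one, ← hsum]
    exact Ideal.sum_mem _ fun i _ => Ideal.mul_mem_right _ _ (Ideal.subset_span (hQ (x i)))
  exact ⟨hsum, hspan, fun r _ => Ideal.eq_zero_of_mul_eq_zero_of_span_eq_top hspan⟩

/-- `∑ᵢ f̂(xᵢ) (f⁻¹)~(yᵢ) = 1`, hence `Q_f S = S` and `Q_f` is faithful. -/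
theorem hat_coordinates_sum_one {G : Type*} [CommGroup G] [Fintype G] [DecidableEq G]
    {S : Type*} [CommRing S] (P : PartialAction G S) (R : Subring S)
    (hGal : P.IsPartialGalois R)
    (m : ℕ) (x y : Fin m → S)
    (hcoord : ∀ g : G, (∑ i : Fin m, x i * P.act g (y i * P.e g⁻¹)) =
      if g = 1 then 1 else 0)
    (w : S) (hw : (∑ g : G, P.act g (w * P.e g⁻¹)) = 1)
    (c : P.Cocycle) (Fhat Gtilde : S → S)
    (hFhat : ∀ z, Fhat z = ∑ g : G, c.finv g * P.act g (w * z * P.e g⁻¹))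
    (hGtilde : ∀ z, Gtilde z = ∑ g : G, c.f g * P.act g (z * P.e g⁻¹)) :
    (∑ i : Fin m, Fhat (x i) * Gtilde (y i)) = 1 ∧
      Ideal.span (PartialAction.Qset P c.f) = ⊤ ∧
      (∀ r : S, r ∈ R → (∀ q ∈ PartialAction.Qset P c.f, r * q = 0) → r = 0) :=
  hat_coordinates_sum_one_general P R m x y hcoord w hw c Fhat Gtilde hFhat hGtilde
end

section
/- For any two partial 1-cocycles f and f' with values in S, the product of the R-submodules Q_f and Q_{f'} equals Q_{f f'}: Q_f Q_{f'} = Q_{ff'}. -/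
section PGAux

open PartialAction Finset

variable {G : Type*} [CommGroup G] {S : Type*} [CommRing S] (P : PartialAction G S)

lemma PG_act_sum {ι : Type*} (g : G) (t : Finset ι) (F : ι → S) :
    P.act g (∑ i ∈ t, F i) = ∑ i ∈ t, P.act g (F i) := by
  classical
  refine Finset.induction_on t (by simp [PartialAction.act_zero]) ?_
  intro a s ha ih
  rw [Finset.sum_insert ha, Finset.sum_insert ha, P.act_add, ih]

lemma PG_act_e' (g h : G) : P.act g (P.e h) = P.e g * P.e (g * h) := by
  rw [← P.act_restrict g (P.e h), mul_comm (P.e h), P.act_inter]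

lemma PG_act_act (g h : G) (z : S) : P.act g (P.act h z) = P.act (g * h) z * P.e g := by
  rw [← P.act_restrict g (P.act h z), P.act_comp, P.act_mul, PG_act_e', mul_inv_cancel_right,
    show P.act (g*h) z * (P.e (g*h) * P.e g) * P.e g
      = (P.act (g*h) z * P.e (g*h)) * (P.e g * P.e g) by ring, P.act_mem, P.e_idem]

lemma PG_f_one (c : P.Cocycle) : c.f 1 = 1 := by
  have h := c.cocycle 1 1
  simp only [inv_one, P.e_one, mul_one, one_mul, P.act_one] at h
  have h2 := c.f_mul_finv 1
  rw [P.e_one] at h2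
  calc c.f 1 = c.f 1 * (c.f 1 * c.finv 1) := by rw [h2, mul_one]
    _ = (c.f 1 * c.f 1) * c.finv 1 := by ring
    _ = c.f 1 * c.finv 1 := by rw [← h]
    _ = 1 := h2

lemma PG_finv_one (c : P.Cocycle) : c.finv 1 = 1 := by
  have h2 := c.f_mul_finv 1
  rw [P.e_one, PG_f_one, one_mul] at h2
  exact h2

lemma PG_act_f (c : P.Cocycle) (h σ : G) :
    P.act h (c.f σ) = c.finv h * c.f (h * σ) * P.e h := by
  have hc := c.cocycle h σ
  rw [P.act_restrict] at hc
  have h1 : c.finv h * (c.f h * P.act h (c.f σ)) = c.finv h * (c.f (h * σ) * P.e h) := by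
    rw [← hc]
  rw [show c.finv h * (c.f h * P.act h (c.f σ))
      = (c.f h * c.finv h) * P.act h (c.f σ) by ring, c.f_mul_finv,
      show P.e h * P.act h (c.f σ) = P.act h (c.f σ) * P.e h by ring, P.act_mem] at h1
  rw [h1]; ring

lemma PG_act_finv (c : P.Cocycle) (h σ : G) :
    P.act h (c.finv σ) = c.f h * c.finv (h * σ) * P.e h := by
  have e1 : P.act h (c.finv σ) = P.act h (c.finv σ) * (P.e h * P.e (h * σ)) := by
    conv_lhs => rw [← c.finv_mem σ, P.act_mul, PG_act_e']
  have hc := c.cocycle h σ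
  rw [P.act_restrict] at hc
  have e2 : P.act h (c.f σ) * (c.f h * c.finv (h * σ)) = P.e h * P.e (h * σ) := by
    calc P.act h (c.f σ) * (c.f h * c.finv (h * σ))
        = (c.f h * P.act h (c.f σ)) * c.finv (h * σ) := by ring
      _ = (c.f (h * σ) * P.e h) * c.finv (h * σ) := by rw [hc]
      _ = (c.f (h * σ) * c.finv (h * σ)) * P.e h := by ring
      _ = P.e (h * σ) * P.e h := by rw [c.f_mul_finv]
      _ = P.e h * P.e (h * σ) := by ring
  calc P.act h (c.finv σ)
      = P.act h (c.finv σ) * (P.e h * P.e (h * σ)) := e1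
    _ = P.act h (c.finv σ) * (P.act h (c.f σ) * (c.f h * c.finv (h * σ))) := by rw [e2]
    _ = (P.act h (c.finv σ) * P.act h (c.f σ)) * (c.f h * c.finv (h * σ)) := by ring
    _ = P.act h (c.finv σ * c.f σ) * (c.f h * c.finv (h * σ)) := by rw [P.act_mul]
    _ = P.act h (c.f σ * c.finv σ) * (c.f h * c.finv (h * σ)) := by rw [mul_comm (c.finv σ)]
    _ = P.act h (P.e σ) * (c.f h * c.finv (h * σ)) := by rw [c.f_mul_finv]
    _ = (P.e h * P.e (h * σ)) * (c.f h * c.finv (h * σ)) := by rw [PG_act_e']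
    _ = c.f h * (c.finv (h * σ) * P.e (h * σ)) * P.e h := by ring
    _ = c.f h * c.finv (h * σ) * P.e h := by rw [c.finv_mem]

lemma PG_mem_Qset (f : G → S) (a : S) (h : ∀ g : G, P.act g a = f g * a) :
    a ∈ Qset P f := by
  intro g; rw [P.act_restrict]; exact h g

lemma PG_Qset_act {f : G → S} {a : S} (ha : a ∈ Qset P f) (g : G) :
    P.act g a = f g * a := by
  rw [← P.act_restrict g a]; exact ha g

lemma PG_tQ_mem [Fintype G] (c : P.Cocycle) (s : S) :
    (∑ σ : G, c.finv σ * P.act σ s) ∈ Qset P c.f := by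
  apply PG_mem_Qset
  intro h
  rw [PG_act_sum]
  have key : ∀ σ : G, P.act h (c.finv σ * P.act σ s)
      = c.f h * (c.finv (h * σ) * P.act (h * σ) s) := by
    intro σ
    rw [P.act_mul, PG_act_finv, PG_act_act]
    calc c.f h * c.finv (h * σ) * P.e h * (P.act (h * σ) s * P.e h)
        = c.f h * (P.e h * P.e h) * (c.finv (h * σ) * P.act (h * σ) s) := by ring
      _ = c.f h * P.e h * (c.finv (h * σ) * P.act (h * σ) s) := by rw [P.e_idem]
      _ = c.f h * (c.finv (h * σ) * P.act (h * σ) s) := by rw [c.f_mem]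
  simp only [key]
  rw [← Finset.mul_sum]
  congr 1
  exact Fintype.sum_equiv (Equiv.mulLeft h) _ _ (fun σ => rfl)

lemma PG_tI_mem [Fintype G] (c : P.Cocycle) (s : S) :
    (∑ σ : G, c.f σ * P.act σ s) ∈ Qset P c.finv := by
  apply PG_mem_Qset
  intro h
  rw [PG_act_sum]
  have key : ∀ σ : G, P.act h (c.f σ * P.act σ s)
      = c.finv h * (c.f (h * σ) * P.act (h * σ) s) := by
    intro σ
    rw [P.act_mul, PG_act_f, PG_act_act]
    calc c.finv h * c.f (h * σ) * P.e h * (P.act (h * σ) s * P.e h)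
        = c.finv h * (P.e h * P.e h) * (c.f (h * σ) * P.act (h * σ) s) := by ring
      _ = c.finv h * P.e h * (c.f (h * σ) * P.act (h * σ) s) := by rw [P.e_idem]
      _ = c.finv h * (c.f (h * σ) * P.act (h * σ) s) := by rw [c.finv_mem]
  simp only [key]
  rw [← Finset.mul_sum]
  congr 1
  exact Fintype.sum_equiv (Equiv.mulLeft h) _ _ (fun σ => rfl)

lemma PG_dual_coord [Fintype G] [DecidableEq G] {m : ℕ} (x y : Fin m → S)
    (hco : ∀ g : G, (∑ i, x i * P.act g (y i)) = if g = 1 then 1 else 0) (g : G) :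
    (∑ i, P.act g (x i) * y i) = if g = 1 then 1 else 0 := by
  have hTe : (∑ i, P.act g (x i) * y i) * P.e g = ∑ i, P.act g (x i) * y i := by
    rw [Finset.sum_mul]
    refine Finset.sum_congr rfl fun i _ => ?_
    rw [show P.act g (x i) * y i * P.e g = P.act g (x i) * P.e g * y i by ring, P.act_mem]
  have h1 : P.act g⁻¹ (∑ i, P.act g (x i) * y i)
      = (if g = 1 then 1 else 0) * P.e g⁻¹ := by
    rw [PG_act_sum]
    have hterm : ∀ i, P.act g⁻¹ (P.act g (x i) * y i)
        = x i * P.act g⁻¹ (y i) * P.e g⁻¹ := by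
      intro i
      rw [P.act_mul, PG_act_act, inv_mul_cancel, P.act_one]
      ring
    simp only [hterm]
    rw [← Finset.sum_mul, hco g⁻¹]
    simp only [inv_eq_one]
  have h2 : P.act g (P.act g⁻¹ (∑ i, P.act g (x i) * y i)) = ∑ i, P.act g (x i) * y i := by
    rw [PG_act_act, mul_inv_cancel, P.act_one, hTe]
  rw [h1] at h2
  rw [← h2]
  by_cases hg : g = 1
  · simp [hg, P.e_one, P.act_one]
  · simp [hg, PartialAction.act_zero]

lemma PG_tr_invariant [Fintype G] (z : S) : (∑ σ : G, P.act σ z) ∈ P.invariants := by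
  intro h
  rw [P.act_restrict, PG_act_sum]
  simp only [PG_act_act]
  rw [← Finset.sum_mul]
  congr 1
  exact Fintype.sum_equiv (Equiv.mulLeft h) _ _ (fun σ => rfl)

end PGAux

/-- `Q_f Q_{f'} = Q_{f f'}` as `R`-submodules of `S`. -/
theorem Qmod_mul {G : Type*} [CommGroup G] [Fintype G] [DecidableEq G]
    {S : Type*} [CommRing S] (P : PartialAction G S) (R : Subring S)
    (hR : ∀ r ∈ R, ∀ g : G, P.act g (r * P.e g⁻¹) = r * P.e g)
    (hGal : P.IsPartialGalois R)
    (c c' cc' : P.Cocycle) (hmul : ∀ g : G, cc'.f g = c.f g * c'.f g) :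
    PartialAction.Qmod P R hR c.f * PartialAction.Qmod P R hR c'.f =
      PartialAction.Qmod P R hR cc'.f := by
  classical
  obtain ⟨hInv, m, x, y, hco0⟩ := hGal
  have hco : ∀ g : G, (∑ i, x i * P.act g (y i)) = if g = 1 then 1 else 0 := by
    intro g
    rw [← hco0 g]
    exact Finset.sum_congr rfl fun i _ => by rw [P.act_restrict]
  set M := PartialAction.Qmod P R hR c.f with hM
  set N := PartialAction.Qmod P R hR c'.f with hN
  set L := PartialAction.Qmod P R hR cc'.f with hL
  set Minv := PartialAction.Qmod P R hR c.finv with hMinv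
  have mem_M : ∀ a : S, a ∈ M ↔ a ∈ PartialAction.Qset P c.f := fun a => Iff.rfl
  have mem_N : ∀ a : S, a ∈ N ↔ a ∈ PartialAction.Qset P c'.f := fun a => Iff.rfl
  have mem_L : ∀ a : S, a ∈ L ↔ a ∈ PartialAction.Qset P cc'.f := fun a => Iff.rfl
  have mem_Minv : ∀ a : S, a ∈ Minv ↔ a ∈ PartialAction.Qset P c.finv := fun a => Iff.rfl
  -- Easy inclusion
  have hle1 : M * N ≤ L := by
    rw [Submodule.mul_le]
    intro u hu v hv
    rw [mem_L]
    apply PG_mem_Qset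
    intro g
    rw [P.act_mul, PG_Qset_act P ((mem_M u).mp hu) g, PG_Qset_act P ((mem_N v).mp hv) g, hmul g]
    ring
  -- pointwise : Q_{finv} * Q_{ff'} ⊆ Q_{f'}
  have hNmem : ∀ v a : S, v ∈ PartialAction.Qset P c.finv → a ∈ PartialAction.Qset P cc'.f →
      v * a ∈ PartialAction.Qset P c'.f := by
    intro v a hv ha
    apply PG_mem_Qset
    intro g
    rw [P.act_mul, PG_Qset_act P hv g, PG_Qset_act P ha g, hmul g]
    calc c.finv g * v * (c.f g * c'.f g * a)
        = (c.f g * c.finv g) * c'.f g * (v * a) := by ring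
      _ = P.e g * c'.f g * (v * a) := by rw [c.f_mul_finv]
      _ = (c'.f g * P.e g) * (v * a) := by ring
      _ = c'.f g * (v * a) := by rw [c'.f_mem]
  -- products of Q_f and Q_{finv} are invariant
  have hprod_mem_R : ∀ w ∈ M * Minv, w ∈ R := by
    intro w hw
    refine Submodule.mul_induction_on hw ?_ ?_
    · intro u hu v hv
      have hinvmem : u * v ∈ P.invariants := by
        intro g
        rw [P.act_restrict, P.act_mul, PG_Qset_act P ((mem_M u).mp hu) g,
          PG_Qset_act P ((mem_Minv v).mp hv) g]
        calc c.f g * u * (c.finv g * v) = (c.f g * c.finv g) * (u * v) := by ring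
          _ = P.e g * (u * v) := by rw [c.f_mul_finv]
          _ = u * v * P.e g := by ring
      have : u * v ∈ (R : Set S) := by rw [hInv]; exact hinvmem
      exact this
    · intro a b ha hb
      exact R.add_mem ha hb
  -- the ideal of R of elements landing in M * Minv
  let I : Ideal R :=
    { carrier := {r : R | (r : S) ∈ M * Minv}
      add_mem' := fun {a b} ha hb => by
        have : ((a + b : R) : S) = (a : S) + (b : S) := rfl
        show ((a + b : R) : S) ∈ M * Minv
        rw [this]
        exact Submodule.add_mem _ ha hb
      zero_mem' := by
        show ((0 : R) : S) ∈ M * Minv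
        have : ((0 : R) : S) = 0 := rfl
        rw [this]
        exact Submodule.zero_mem _
      smul_mem' := fun r xx hx => by
        show ((r • xx : R) : S) ∈ M * Minv
        have h1 : ((r • xx : R) : S) = r • (xx : S) := by
          rw [smul_eq_mul, Subring.smul_def]
          rfl
        rw [h1]
        exact Submodule.smul_mem _ r hx }
  have mem_I : ∀ r : R, r ∈ I ↔ (r : S) ∈ M * Minv := fun r => Iff.rfl
  -- the canonical elements
  set u : Fin m → S := fun i => ∑ σ : G, c.finv σ * P.act σ (x i) with hu_def
  set v : Fin m → S := fun j => ∑ σ : G, c.f σ * P.act σ (x j) with hv_def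
  have hu : ∀ i, u i ∈ M := fun i => (mem_M _).mpr (PG_tQ_mem P c (x i))
  have hv : ∀ j, v j ∈ Minv := fun j => (mem_Minv _).mpr (PG_tI_mem P c (x j))
  have hu1 : (∑ i, u i * y i) = 1 := by
    have h1 : ∀ i : Fin m, u i * y i = ∑ σ : G, c.finv σ * (P.act σ (x i) * y i) := by
      intro i
      rw [hu_def, Finset.sum_mul]
      exact Finset.sum_congr rfl fun σ _ => by ring
    simp only [h1]
    rw [Finset.sum_comm]
    have h2 : ∀ σ : G, (∑ i, c.finv σ * (P.act σ (x i) * y i))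
        = c.finv σ * (if σ = 1 then 1 else 0) := by
      intro σ
      rw [← Finset.mul_sum, PG_dual_coord P x y hco σ]
    simp only [h2, mul_ite, mul_one, mul_zero]
    rw [Finset.sum_ite_eq' Finset.univ (1 : G) c.finv]
    simp [PG_finv_one P c]
  have hv1 : (∑ j, v j * y j) = 1 := by
    have h1 : ∀ j : Fin m, v j * y j = ∑ σ : G, c.f σ * (P.act σ (x j) * y j) := by
      intro j
      rw [hv_def, Finset.sum_mul]
      exact Finset.sum_congr rfl fun σ _ => by ring
    simp only [h1]
    rw [Finset.sum_comm]
    have h2 : ∀ σ : G, (∑ j, c.f σ * (P.act σ (x j) * y j))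
        = c.f σ * (if σ = 1 then 1 else 0) := by
      intro σ
      rw [← Finset.mul_sum, PG_dual_coord P x y hco σ]
    simp only [h2, mul_ite, mul_one, mul_zero]
    rw [Finset.sum_ite_eq' Finset.univ (1 : G) c.f]
    simp [PG_f_one P c]
  -- I • ⊤ = ⊤
  have hIS : (⊤ : Submodule R S) ≤ I • (⊤ : Submodule R S) := by
    intro s _
    have key : s = ∑ i, ∑ j, (u i * v j) * (y i * (y j * s)) := by
      calc s = 1 * (1 * s) := by ring
        _ = (∑ i, u i * y i) * ((∑ j, v j * y j) * s) := by rw [hu1, hv1]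
        _ = ∑ i, ∑ j, (u i * v j) * (y i * (y j * s)) := by
            rw [Finset.sum_mul]
            refine Finset.sum_congr rfl fun i _ => ?_
            rw [show (∑ j, v j * y j) * s = ∑ j, v j * y j * s from Finset.sum_mul _ _ _,
              Finset.mul_sum]
            exact Finset.sum_congr rfl fun j _ => by ring
    rw [key]
    refine Submodule.sum_mem _ fun i _ => Submodule.sum_mem _ fun j _ => ?_
    have hmm : u i * v j ∈ M * Minv := Submodule.mul_mem_mul (hu i) (hv j)
    have hmR : u i * v j ∈ R := hprod_mem_R _ hmm
    have hmI : (⟨u i * v j, hmR⟩ : R) ∈ I := hmm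
    have := Submodule.smul_mem_smul hmI (Submodule.mem_top (x := y i * (y j * s)))
    have hsm : (⟨u i * v j, hmR⟩ : R) • (y i * (y j * s)) = (u i * v j) * (y i * (y j * s)) :=
      Subring.smul_def _ _
    rwa [hsm] at this
  -- S is a finitely generated R-module
  have htr : ∀ z : S, (∑ σ : G, P.act σ z) ∈ R := by
    intro z
    have h0 : (∑ σ : G, P.act σ z) ∈ (R : Set S) := by
      rw [hInv]; exact PG_tr_invariant P z
    exact h0
  have hspan : ∀ s : S, s = ∑ i, x i * (∑ σ : G, P.act σ (y i * s)) := by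
    intro s
    have h1 : ∀ i, x i * (∑ σ : G, P.act σ (y i * s))
        = ∑ σ : G, (x i * P.act σ (y i)) * P.act σ s := by
      intro i
      rw [Finset.mul_sum]
      refine Finset.sum_congr rfl fun σ _ => ?_
      rw [P.act_mul]; ring
    simp only [h1]
    rw [Finset.sum_comm]
    have h2 : ∀ σ : G, (∑ i, (x i * P.act σ (y i)) * P.act σ s)
        = (if σ = 1 then 1 else 0) * P.act σ s := by
      intro σ; rw [← Finset.sum_mul, hco σ]
    simp only [h2, ite_mul, one_mul, zero_mul]
    rw [Finset.sum_ite_eq' Finset.univ (1 : G) (fun σ => P.act σ s)]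
    simp [P.act_one]
  have htop_fg : (⊤ : Submodule R S).FG := by
    rw [Submodule.fg_def]
    refine ⟨Set.range x, Set.finite_range x, ?_⟩
    rw [eq_top_iff]
    intro s _
    have hs2 : (∑ i, (⟨∑ σ : G, P.act σ (y i * s), htr _⟩ : R) • x i) = s := by
      conv_rhs => rw [hspan s]
      refine Finset.sum_congr rfl fun i _ => ?_
      rw [Subring.smul_def]
      exact mul_comm _ _
    rw [← hs2]
    exact Submodule.sum_mem _ fun i _ =>
      Submodule.smul_mem _ _ (Submodule.subset_span ⟨i, rfl⟩)
  -- Nakayama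
  obtain ⟨r, hr1, hr0⟩ :=
    Submodule.exists_sub_one_mem_and_smul_eq_zero_of_fg_of_le_smul I ⊤ htop_fg hIS
  have h1r : r • (1 : S) = 0 := hr0 1 Submodule.mem_top
  have h1r' : (r : S) = 0 := by
    rw [Subring.smul_def] at h1r
    simpa using h1r
  have hr : r = 0 := Subtype.ext h1r'
  rw [hr, zero_sub] at hr1
  have hone : (1 : R) ∈ I := by
    have := I.neg_mem hr1
    simpa using this
  have h1MM : (1 : S) ∈ M * Minv := (mem_I 1).mp hone
  -- conclusion
  refine le_antisymm hle1 ?_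
  intro a ha
  have ha' : a ∈ PartialAction.Qset P cc'.f := (mem_L a).mp ha
  have hmain : ∀ w ∈ M * Minv, w * a ∈ M * N := by
    intro w hw
    refine Submodule.mul_induction_on hw ?_ ?_
    · intro uu huu vv hvv
      have hva : vv * a ∈ N := (mem_N _).mpr (hNmem vv a ((mem_Minv vv).mp hvv) ha')
      have := Submodule.mul_mem_mul huu hva
      rwa [← mul_assoc] at this
    · intro b1 b2 h1 h2
      rw [add_mul]
      exact Submodule.add_mem _ h1 h2
  have := hmain 1 h1MM
  rwa [one_mul] at this
end

section
/- For every partial 1-cocycle f, the R-submodule Q_f of S is an invertible R-submodule: Q_f Q_{f⁻¹} = R, where f⁻¹(g) is the inverse of f(g) in S 1_g. -/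
namespace PartialAction

variable {G : Type*} [Group G] {S : Type*} [CommRing S] (P : PartialAction G S)

/-- `act g` as an additive monoid hom. -/
def actHom (g : G) : S →+ S := AddMonoidHom.mk' (P.act g) (P.act_add g)

@[simp] lemma actHom_apply (g : G) (x : S) : P.actHom g x = P.act g x := rfl

lemma act_neg (g : G) (x : S) : P.act g (-x) = -P.act g x :=
  map_neg (P.actHom g) x

/-- Multiplying by a central idempotent from outside an `act`. -/
theorem e_mul_act (h k : G) (z : S) :
    P.e h * P.act k z = P.act k (z * P.e (k⁻¹ * h)) := by
  have h1 : P.act k (P.e k⁻¹ * P.e (k⁻¹ * h)) = P.e k * P.e h := by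
    have := P.act_inter k (k⁻¹ * h)
    rwa [mul_inv_cancel_left] at this
  calc P.e h * P.act k z = P.act k z * P.e k * P.e h := by rw [P.act_mem]; ring
    _ = P.act k z * P.act k (P.e k⁻¹ * P.e (k⁻¹ * h)) := by rw [h1]; ring
    _ = P.act k (z * (P.e k⁻¹ * P.e (k⁻¹ * h))) := (P.act_mul _ _ _).symm
    _ = P.act k ((z * P.e (k⁻¹ * h)) * P.e k⁻¹) := by
        rw [show z * (P.e k⁻¹ * P.e (k⁻¹ * h)) = (z * P.e (k⁻¹ * h)) * P.e k⁻¹ from by ring]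
    _ = P.act k (z * P.e (k⁻¹ * h)) := P.act_restrict _ _

/-- The master product formula for two partial actions. -/
theorem act_mul_act_s10 (h g : G) (u v : S) :
    P.act h u * P.act g v = P.act h (u * P.act (h⁻¹ * g) v) := by
  have hX : P.act g (v * P.e (g⁻¹ * h)) = P.act h (P.act (h⁻¹ * g) v * P.e h⁻¹) := by
    have hc := P.act_comp h (h⁻¹ * g) v
    rw [mul_inv_cancel_left, mul_inv_rev, inv_inv] at hc
    have he : P.act g (v * P.e (g⁻¹ * h)) * P.e h = P.act g (v * P.e (g⁻¹ * h)) := by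
      rw [mul_comm, P.e_mul_act h g]
      rw [show v * P.e (g⁻¹ * h) * P.e (g⁻¹ * h) = v * (P.e (g⁻¹ * h) * P.e (g⁻¹ * h)) from by
        ring, P.e_idem]
    rw [hc, he]
  calc P.act h u * P.act g v
      = P.act h u * P.e h * P.act g v := by rw [P.act_mem]
    _ = P.act h u * (P.e h * P.act g v) := by ring
    _ = P.act h u * P.act g (v * P.e (g⁻¹ * h)) := by rw [P.e_mul_act h g]
    _ = P.act h u * P.act h (P.act (h⁻¹ * g) v * P.e h⁻¹) := by rw [hX]
    _ = P.act h (u * (P.act (h⁻¹ * g) v * P.e h⁻¹)) := (P.act_mul _ _ _).symm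
    _ = P.act h ((u * P.act (h⁻¹ * g) v) * P.e h⁻¹) := by
        rw [show u * (P.act (h⁻¹ * g) v * P.e h⁻¹) = (u * P.act (h⁻¹ * g) v) * P.e h⁻¹ from by
          ring]
    _ = _ := P.act_restrict _ _

theorem act_act (h g : G) (b : S) :
    P.act h (P.act g b) = P.e h * P.act (h * g) b := by
  calc P.act h (P.act g b) = P.act h (P.act g b * P.e h⁻¹) := (P.act_restrict _ _).symm
    _ = P.act (h * g) (b * P.e g⁻¹) * P.e h := P.act_comp h g b
    _ = (P.e h * P.act (h * g) b) * P.e h := by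
        rw [P.e_mul_act h (h * g) b, show (h * g)⁻¹ * h = g⁻¹ from by group]
    _ = (P.e h * P.e h) * P.act (h * g) b := by ring
    _ = P.e h * P.act (h * g) b := by rw [P.e_idem]

theorem act_cocycle_f (c : P.Cocycle) (h g : G) :
    P.act h (c.f g) = c.finv h * c.f (h * g) * P.e h := by
  have hc := c.cocycle h g
  rw [P.act_restrict] at hc
  have h2 : c.finv h * (c.f (h * g) * P.e h) = P.act h (c.f g) := by
    rw [hc, show c.finv h * (c.f h * P.act h (c.f g)) = c.f h * c.finv h * P.act h (c.f g) from by
      ring, c.f_mul_finv, mul_comm, P.act_mem]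
  rw [← h2]; ring

lemma mem_Qmod {R : Subring S} {hR : ∀ r ∈ R, ∀ g : G, P.act g (r * P.e g⁻¹) = r * P.e g}
    {f : G → S} {a : S} :
    a ∈ Qmod P R hR f ↔ ∀ g : G, P.act g (a * P.e g⁻¹) = f g * a := Iff.rfl

/-- Uniqueness of inverses in the ideal `S e_g`. -/
lemma finv_eq (c ci : P.Cocycle) (hinv : ∀ g : G, ci.f g = c.finv g) (h : G) :
    ci.finv h = c.f h := by
  calc ci.finv h = ci.finv h * P.e h := (ci.finv_mem h).symm
    _ = ci.finv h * (c.f h * c.finv h) := by rw [c.f_mul_finv]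
    _ = (ci.finv h * ci.f h) * c.f h := by rw [hinv]; ring
    _ = (ci.f h * ci.finv h) * c.f h := by ring
    _ = P.e h * c.f h := by rw [ci.f_mul_finv]
    _ = c.f h := by rw [mul_comm, c.f_mem]

section Trace

variable [Fintype G]

/-- The trace map of the partial action. -/
def tr (d : S) : S := ∑ g : G, P.act g d

lemma tr_neg (d : S) : P.tr (-d) = -P.tr d := by
  unfold tr
  rw [← Finset.sum_neg_distrib]
  exact Finset.sum_congr rfl fun g _ => P.act_neg g d

/-- The key membership lemma: `∑_g f(g) α_g(b)` lies in `Q_{f⁻¹}`. -/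
theorem L_mem (c : P.Cocycle) (b : S) (h : G) :
    P.act h ((∑ g : G, c.f g * P.act g b) * P.e h⁻¹)
      = c.finv h * ∑ g : G, c.f g * P.act g b := by
  rw [P.act_restrict]
  rw [show P.act h (∑ g : G, c.f g * P.act g b) = ∑ g : G, P.act h (c.f g * P.act g b) from
    map_sum (P.actHom h) _ _]
  have key : ∀ g : G, P.act h (c.f g * P.act g b)
      = c.finv h * (c.f (h * g) * P.act (h * g) b) := by
    intro g
    rw [P.act_mul, P.act_cocycle_f, P.act_act]
    have h4 : c.finv h * P.e h = c.finv h := c.finv_mem h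
    calc c.finv h * c.f (h * g) * P.e h * (P.e h * P.act (h * g) b)
        = (c.finv h * P.e h * P.e h) * (c.f (h * g) * P.act (h * g) b) := by ring
      _ = c.finv h * (c.f (h * g) * P.act (h * g) b) := by rw [h4, h4]
  rw [Finset.sum_congr rfl fun g _ => key g, ← Finset.mul_sum]
  congr 1
  exact Fintype.sum_equiv (Equiv.mulLeft h) _ _ fun g => rfl

theorem act_tr (h : G) (d : S) : P.act h (P.tr d * P.e h⁻¹) = P.tr d * P.e h := by
  rw [P.act_restrict]
  rw [show P.act h (P.tr d) = ∑ g : G, P.act h (P.act g d) from map_sum (P.actHom h) _ _]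
  rw [Finset.sum_congr rfl fun g (_ : g ∈ Finset.univ) => P.act_act h g d, ← Finset.mul_sum]
  rw [show ∑ g : G, P.act (h * g) d = P.tr d from
    Fintype.sum_equiv (Equiv.mulLeft h) _ _ fun g => rfl]
  ring

theorem tr_mem {R : Subring S} (hRinv : (R : Set S) = P.invariants) (d : S) :
    P.tr d ∈ R := by
  rw [← SetLike.mem_coe, hRinv]
  exact fun h => P.act_tr h d

theorem tr_mul {R : Subring S}
    (hR : ∀ r ∈ R, ∀ g : G, P.act g (r * P.e g⁻¹) = r * P.e g)
    {r : S} (hr : r ∈ R) (d : S) : P.tr (r * d) = r * P.tr d := by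
  unfold tr
  rw [Finset.mul_sum]
  refine Finset.sum_congr rfl fun g _ => ?_
  have h1 : P.act g r = r * P.e g := by rw [← P.act_restrict g r]; exact hR r hr g
  rw [P.act_mul, h1, show r * P.e g * P.act g d = r * (P.act g d * P.e g) from by ring,
    P.act_mem]

theorem coords_tr [DecidableEq G] {m : ℕ} {x y : Fin m → S}
    (hxy : ∀ g : G, (∑ i : Fin m, x i * P.act g (y i * P.e g⁻¹)) = if g = 1 then 1 else 0)
    (s : S) : ∑ i : Fin m, x i * P.tr (y i * s) = s := by
  have hxy' : ∀ g : G, (∑ i : Fin m, x i * P.act g (y i)) = if g = 1 then (1 : S) else 0 := by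
    intro g
    rw [← hxy g]
    exact Finset.sum_congr rfl fun i _ => by rw [P.act_restrict]
  calc ∑ i : Fin m, x i * P.tr (y i * s)
      = ∑ i : Fin m, ∑ g : G, x i * (P.act g (y i) * P.act g s) := by
        refine Finset.sum_congr rfl fun i _ => ?_
        unfold tr
        rw [Finset.mul_sum]
        exact Finset.sum_congr rfl fun g _ => by rw [P.act_mul]
    _ = ∑ g : G, (∑ i : Fin m, x i * P.act g (y i)) * P.act g s := by
        rw [Finset.sum_comm]
        exact Finset.sum_congr rfl fun g _ => by
          rw [Finset.sum_mul]
          exact Finset.sum_congr rfl fun i _ => by ring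
    _ = ∑ g : G, (if g = 1 then (1 : S) else 0) * P.act g s := by
        exact Finset.sum_congr rfl fun g _ => by rw [hxy' g]
    _ = P.act 1 s := by
        rw [Finset.sum_eq_single (1 : G)]
        · rw [if_pos rfl, one_mul]
        · intro g _ hg; rw [if_neg hg, zero_mul]
        · intro habs; exact absurd (Finset.mem_univ 1) habs
    _ = s := P.act_one s

theorem exists_tr_eq_one [DecidableEq G] {R : Subring S}
    (hR : ∀ r ∈ R, ∀ g : G, P.act g (r * P.e g⁻¹) = r * P.e g)
    (hGal : P.IsPartialGalois R) : ∃ d : S, P.tr d = 1 := by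
  obtain ⟨hRinv, m, x, y, hxy⟩ := hGal
  let I : Ideal R :=
    { carrier := {r : R | ∃ d : S, P.tr d = (r : S)}
      add_mem' := by
        rintro a b ⟨d, hd⟩ ⟨d', hd'⟩
        refine ⟨d + d', ?_⟩
        have htr : P.tr (d + d') = P.tr d + P.tr d' := by
          unfold tr
          rw [← Finset.sum_add_distrib]
          exact Finset.sum_congr rfl fun g _ => P.act_add g d d'
        rw [htr, hd, hd']
        norm_cast
      zero_mem' := ⟨0, by unfold tr; simp [PartialAction.act_zero]⟩
      smul_mem' := by
        rintro c a ⟨d, hd⟩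
        refine ⟨(c : S) * d, ?_⟩
        rw [P.tr_mul hR c.2 d, hd]
        rfl }
  have hle : (⊤ : Submodule R S) ≤ I • (⊤ : Submodule R S) := by
    intro s _
    have hs : s = ∑ i : Fin m, (⟨P.tr (y i * s), P.tr_mem hRinv _⟩ : R) • x i :=
      calc s = ∑ i : Fin m, x i * P.tr (y i * s) := (P.coords_tr hxy s).symm
        _ = _ := Finset.sum_congr rfl fun i _ => by
              simp only [Subring.smul_def, smul_eq_mul]; ring
    rw [hs]
    exact Submodule.sum_mem _ fun i _ =>
      Submodule.smul_mem_smul (⟨y i * s, rfl⟩ : (⟨P.tr (y i * s), P.tr_mem hRinv _⟩ : R) ∈ I)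
        Submodule.mem_top
  have hfg : (⊤ : Submodule R S).FG := by
    classical
    refine ⟨Finset.image x Finset.univ, ?_⟩
    apply top_unique
    intro s _
    have hs : s = ∑ i : Fin m, (⟨P.tr (y i * s), P.tr_mem hRinv _⟩ : R) • x i :=
      calc s = ∑ i : Fin m, x i * P.tr (y i * s) := (P.coords_tr hxy s).symm
        _ = _ := Finset.sum_congr rfl fun i _ => by
              simp only [Subring.smul_def, smul_eq_mul]; ring
    rw [hs]
    exact Submodule.sum_mem _ fun i _ => Submodule.smul_mem _ _
      (Submodule.subset_span
        (Finset.mem_coe.mpr (Finset.mem_image_of_mem x (Finset.mem_univ i))))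
  obtain ⟨r, hr1, hr2⟩ :=
    Submodule.exists_sub_one_mem_and_smul_eq_zero_of_fg_of_le_smul I ⊤ hfg hle
  have hr0 : (r : S) = 0 := by
    have := hr2 (1 : S) Submodule.mem_top
    rwa [Subring.smul_def, smul_eq_mul, mul_one] at this
  obtain ⟨d, hd⟩ := hr1
  refine ⟨-d, ?_⟩
  rw [P.tr_neg, hd]
  push_cast
  rw [hr0]
  ring

/-- The key computation: pairing the two trace-type elements built from Galois
coordinates recovers the trace. -/
theorem sum_prod_eq_tr [DecidableEq G] (c ci : P.Cocycle)
    (hinv : ∀ g : G, ci.f g = c.finv g) {m : ℕ} (x y : Fin m → S)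
    (hxy : ∀ g : G, (∑ i : Fin m, x i * P.act g (y i * P.e g⁻¹)) = if g = 1 then 1 else 0)
    (d : S) :
    ∑ i : Fin m, (∑ h : G, ci.f h * P.act h (x i * d)) * (∑ g : G, c.f g * P.act g (y i))
      = P.tr d := by
  have hxy' : ∀ g : G, (∑ i : Fin m, x i * P.act g (y i)) = if g = 1 then (1 : S) else 0 := by
    intro g
    rw [← hxy g]
    exact Finset.sum_congr rfl fun i _ => by rw [P.act_restrict]
  calc ∑ i : Fin m, (∑ h : G, ci.f h * P.act h (x i * d)) * (∑ g : G, c.f g * P.act g (y i))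
      = ∑ i : Fin m, ∑ h : G, ∑ g : G,
          ci.f h * c.f g * P.act h (x i * d * P.act (h⁻¹ * g) (y i)) := by
        refine Finset.sum_congr rfl fun i _ => ?_
        rw [Finset.sum_mul_sum]
        refine Finset.sum_congr rfl fun h _ => Finset.sum_congr rfl fun g _ => ?_
        rw [show ci.f h * P.act h (x i * d) * (c.f g * P.act g (y i))
            = ci.f h * c.f g * (P.act h (x i * d) * P.act g (y i)) from by ring,
          P.act_mul_act_s10]
    _ = ∑ h : G, ∑ g : G, ∑ i : Fin m,
          ci.f h * c.f g * P.act h (x i * d * P.act (h⁻¹ * g) (y i)) := by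
        rw [Finset.sum_comm]
        exact Finset.sum_congr rfl fun h _ => Finset.sum_comm
    _ = ∑ h : G, ∑ g : G,
          ci.f h * c.f g * P.act h (d * if h⁻¹ * g = 1 then (1 : S) else 0) := by
        refine Finset.sum_congr rfl fun h _ => Finset.sum_congr rfl fun g _ => ?_
        rw [← Finset.mul_sum,
          show (∑ i : Fin m, P.act h (x i * d * P.act (h⁻¹ * g) (y i)))
              = P.act h (∑ i : Fin m, x i * d * P.act (h⁻¹ * g) (y i)) from
            (map_sum (P.actHom h) _ _).symm]
        congr 2
        rw [show (∑ i : Fin m, x i * d * P.act (h⁻¹ * g) (y i))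
            = d * ∑ i : Fin m, x i * P.act (h⁻¹ * g) (y i) from by
          rw [Finset.mul_sum]; exact Finset.sum_congr rfl fun i _ => by ring,
          hxy' (h⁻¹ * g)]
    _ = ∑ h : G, P.act h d := by
        refine Finset.sum_congr rfl fun h _ => ?_
        rw [Finset.sum_eq_single h]
        · rw [if_pos (inv_mul_cancel h), mul_one, hinv h,
            show c.finv h * c.f h * P.act h d = c.f h * c.finv h * P.act h d from by ring,
            c.f_mul_finv, P.e_mul_act h h, inv_mul_cancel, P.e_one, mul_one]
        · intro g _ hg
          rw [if_neg (fun hc => hg (by rwa [inv_mul_eq_one, eq_comm] at hc)), mul_zero,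
            PartialAction.act_zero, mul_zero]
        · intro habs; exact absurd (Finset.mem_univ h) habs
    _ = P.tr d := rfl

end Trace

end PartialAction


/-- `Q_f` is an invertible `R`-submodule: `Q_f Q_{f⁻¹} = R`. -/
theorem Qmod_mul_inv {G : Type*} [CommGroup G] [Fintype G] [DecidableEq G]
    {S : Type*} [CommRing S] (P : PartialAction G S) (R : Subring S)
    (hR : ∀ r ∈ R, ∀ g : G, P.act g (r * P.e g⁻¹) = r * P.e g)
    (hGal : P.IsPartialGalois R)
    (c ci : P.Cocycle) (hinv : ∀ g : G, ci.f g = c.finv g) :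
    PartialAction.Qmod P R hR c.f * PartialAction.Qmod P R hR ci.f =
      (1 : Submodule R S) := by
  have hRinv : (R : Set S) = P.invariants := hGal.1
  obtain ⟨m, x, y, hxy⟩ := hGal.2
  apply le_antisymm
  · rw [Submodule.mul_le]
    intro a ha b hb
    have hab : a * b ∈ P.invariants := by
      intro g
      have ha' := (P.mem_Qmod.mp ha) g
      have hb' := (P.mem_Qmod.mp hb) g
      calc P.act g (a * b * P.e g⁻¹)
          = P.act g ((a * P.e g⁻¹) * (b * P.e g⁻¹)) := by
            rw [show (a * P.e g⁻¹) * (b * P.e g⁻¹) = a * b * (P.e g⁻¹ * P.e g⁻¹) from by ring,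
              P.e_idem]
        _ = P.act g (a * P.e g⁻¹) * P.act g (b * P.e g⁻¹) := P.act_mul _ _ _
        _ = (c.f g * a) * (ci.f g * b) := by rw [ha', hb']
        _ = (c.f g * c.finv g) * (a * b) := by rw [hinv]; ring
        _ = a * b * P.e g := by rw [c.f_mul_finv]; ring
    rw [Submodule.mem_one]
    refine ⟨⟨a * b, ?_⟩, rfl⟩
    rw [← SetLike.mem_coe, hRinv]
    exact hab
  · rw [Submodule.one_le]
    obtain ⟨d, hd⟩ := P.exists_tr_eq_one hR hGal
    have key := P.sum_prod_eq_tr c ci hinv x y hxy d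
    rw [hd] at key
    rw [← key]
    refine Submodule.sum_mem _ fun i _ => Submodule.mul_mem_mul ?_ ?_
    · refine P.mem_Qmod.mpr fun g => ?_
      rw [P.L_mem ci (x i * d) g, P.finv_eq c ci hinv g]
    · refine P.mem_Qmod.mpr fun g => ?_
      rw [P.L_mem c (y i) g, ← hinv g]
end
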